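/- arXiv:1807.06474 — 6 statements merged into one kernel-verified Lean document; each statement's English description precedes it below -/
import Mathlib

section
/- Let Δ > 0, ā ≥ 0, b̄ ≥ 0, σ̄ ∈ ℝ, and let a̲, a* be reals with 0 ≤ a̲ ≤ a*. Suppose y ≥ 0, z ∈ ℝ, w ∈ ℝ, and suppose y′ > 0 satisfies the implicit Euler step equation y′ = y + (a̲/y′ − ā·y′ + b̄·z²/y′)·Δ + σ̄·w. Then (y′)² ≤ (2·a* + σ̄²)·Δ + 2·b̄·z²·Δ + y² + M, where M = 2·σ̄·y·w + σ̄²·(w² − Δ). -/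
/-!
Multiplying the implicit step by `y'` gives `y'² = (y + σ̄w) y' + (a̲ − ā y'² + b̄ z²) Δ`.
Bounding the cross term by `2 (y + σ̄w) y' ≤ (y + σ̄w)² + y'²` and dropping `−ā y'² Δ ≤ 0` leaves
`y'² ≤ (y + σ̄w)² + 2 (a̲ + b̄ z²) Δ`, and `(y + σ̄w)² = y² + σ̄²Δ + M`.
-/

lemma sq_eq_mul_add_of_implicit_step {x a b c Δ y' : ℝ} (hy' : y' ≠ 0)
    (h : y' = x + (a / y' - c * y' + b / y') * Δ) :
    y' ^ 2 = x * y' + (a - c * y' ^ 2 + b) * Δ := by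
  field_simp at h
  linear_combination h

lemma sq_le_sq_add_two_mul_of_sq_eq {x y r : ℝ} (h : y ^ 2 = x * y + r) :
    y ^ 2 ≤ x ^ 2 + 2 * r := by
  nlinarith [sq_nonneg (y - x)]

theorem implicit_euler_one_step_square_bound_general
    (Δ aBar bBar σBar aLow aStar : ℝ)
    (hΔ : 0 < Δ) (haBar : 0 ≤ aBar)
    (haStar : aLow ≤ aStar)
    (y z w y' : ℝ) (hy' : 0 < y')
    (hstep : y' = y + (aLow / y' - aBar * y' + bBar * z ^ 2 / y') * Δ + σBar * w) :
    y' ^ 2 ≤ (2 * aStar + σBar ^ 2) * Δ + 2 * bBar * z ^ 2 * Δ + y ^ 2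
        + (2 * σBar * y * w + σBar ^ 2 * (w ^ 2 - Δ)) := by
  have hsq : y' ^ 2 = (y + σBar * w) * y' + (aLow - aBar * y' ^ 2 + bBar * z ^ 2) * Δ :=
    sq_eq_mul_add_of_implicit_step hy'.ne' (by linarith)
  have hdrift : 0 ≤ aBar * y' ^ 2 * Δ := by positivity
  have hlow : aLow * Δ ≤ aStar * Δ := mul_le_mul_of_nonneg_right haStar hΔ.le
  linear_combination sq_le_sq_add_two_mul_of_sq_eq hsq + 2 * hdrift + 2 * hlow

/-- Pathwise one-step second-moment inequality for the drift-implicit Euler scheme: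
if `y' > 0` solves `y' = y + (a̲/y' − ā·y' + b̄·z²/y')·Δ + σ̄·w`, then
`(y')² ≤ (2a* + σ̄²)Δ + 2b̄·z²·Δ + y² + M` with
`M = 2σ̄·y·w + σ̄²·(w² − Δ)`. -/
theorem implicit_euler_one_step_square_bound
    (Δ aBar bBar σBar aLow aStar : ℝ)
    (hΔ : 0 < Δ) (haBar : 0 ≤ aBar) (hbBar : 0 ≤ bBar)
    (haLow : 0 ≤ aLow) (haStar : aLow ≤ aStar)
    (y z w y' : ℝ) (hy : 0 ≤ y) (hy' : 0 < y')
    (hstep : y' = y + (aLow / y' - aBar * y' + bBar * z ^ 2 / y') * Δ + σBar * w) :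
    y' ^ 2 ≤ (2 * aStar + σBar ^ 2) * Δ + 2 * bBar * z ^ 2 * Δ + y ^ 2
        + (2 * σBar * y * w + σBar ^ 2 * (w ^ 2 - Δ)) :=
  implicit_euler_one_step_square_bound_general Δ aBar bBar σBar aLow aStar hΔ haBar haStar y z w y'
    hy' hstep
end

section
/- Fix N ∈ ℕ with N ≥ 1, τ > 0, set Δ = τ/N and t_k = t₀ + k·Δ. Let ā ≥ 0, b̄ ≥ 0, σ̄ > 0 and let a̲ : ℝ → ℝ be measurable with 0 ≤ a̲(t) ≤ a* for all t. On a probability space, let (ΔW_k)_{k≥0} be independent random variables, each with the Gaussian law N(0, Δ), and let y_{−N}, …, y₀ be nonnegative random variables, independent of the family (ΔW_k)_{k≥0}, such that E[y_k²] ≤ K₀ for all −N ≤ k ≤ 0. Define recursively for k ≥ 0: y_{k+1} = (y_k + σ̄·ΔW_k + √((y_k + σ̄·ΔW_k)² + 4·(1 + ā·Δ)·(a̲(t_{k+1}) + b̄·y²_{k+1−N})·Δ)) / (2·(1 + ā·Δ)). Then for every T > t₀ there exists a finite constant K_T such that sup over all k ≥ 0 with t_k ≤ T of E[y_k²] is at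 most K_T. -/
/-!
The scheme value `y_{k+1}` is the positive root of
`(1 + āΔ) r² = (y_k + σ̄ΔW_k) r + (a̲ + b̄ y²_{k+1-N}) Δ`. Since `1 + āΔ ≥ 1`, the inequality
`p r ≤ (p² + r²) / 2` turns this equation into
`y²_{k+1} ≤ 2 y_k² + 2 σ̄² ΔW_k² + 2 a* Δ + 2 b̄ Δ y²_{k+1-N}`. Taking expectations, with
`E[ΔW_k²] = Δ`, the second moments satisfy a linear delay recursion, and a discrete Gronwall argument
bounds them geometrically in the number of steps, which is at most `⌈(T - t₀) / Δ⌉` before time `T`.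
-/

open MeasureTheory ProbabilityTheory
open scoped ENNReal NNReal

lemma sq_le_of_mul_sq_eq {d p q r : ℝ} (hd : 1 ≤ d) (hr : d * r ^ 2 = p * r + q) :
    r ^ 2 ≤ p ^ 2 + 2 * q := by
  nlinarith [sq_nonneg (p - r), mul_nonneg (sub_nonneg.2 hd) (sq_nonneg r)]

lemma mul_sq_quadraticRoot {d p q : ℝ} (hd : 0 < d) (hdisc : 0 ≤ p ^ 2 + 4 * d * q) :
    d * ((p + √(p ^ 2 + 4 * d * q)) / (2 * d)) ^ 2
      = p * ((p + √(p ^ 2 + 4 * d * q)) / (2 * d)) + q := by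
  have hsqrt := Real.sq_sqrt hdisc
  set s := √(p ^ 2 + 4 * d * q)
  field_simp
  linear_combination hsqrt

lemma sq_implicitEuler_le {d x σ w a A b z Δ : ℝ} (hd : 1 ≤ d) (hΔ : 0 ≤ Δ)
    (ha : 0 ≤ a) (hA : a ≤ A) (hb : 0 ≤ b) :
    ((x + σ * w + √((x + σ * w) ^ 2 + 4 * d * (a + b * z ^ 2) * Δ)) / (2 * d)) ^ 2
      ≤ 2 * x ^ 2 + 2 * b * Δ * z ^ 2 + (2 * σ ^ 2 * w ^ 2 + 2 * A * Δ) := by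
  have hq : 0 ≤ (a + b * z ^ 2) * Δ := by positivity
  rw [mul_assoc (4 * d)]
  have hroot := sq_le_of_mul_sq_eq hd (mul_sq_quadraticRoot (p := x + σ * w)
    (q := (a + b * z ^ 2) * Δ) (by linarith) (by positivity))
  nlinarith [sq_nonneg (x - σ * w), mul_le_mul_of_nonneg_right hA hΔ]

lemma lintegral_ofReal_sq_gaussianReal (v : ℝ≥0) :
    ∫⁻ x, ENNReal.ofReal (x ^ 2) ∂gaussianReal 0 v = v := by
  have h := evariance_eq_lintegral_ofReal id (gaussianReal 0 v)
  rw [← ofReal_variance (memLp_id_gaussianReal 2), variance_id_gaussianReal] at h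
  simpa [integral_id_gaussianReal] using h.symm

lemma lintegral_ofReal_sq_le_of_sq_le {Ω : Type*} [MeasurableSpace Ω] {μ : Measure Ω}
    [IsProbabilityMeasure μ] {X f g h : Ω → ℝ} {α β γ δ : ℝ}
    (hf : AEMeasurable f μ) (hg : AEMeasurable g μ)
    (hX : ∀ ω, X ω ^ 2 ≤ α * f ω ^ 2 + β * g ω ^ 2 + (γ * h ω ^ 2 + δ)) :
    ∫⁻ ω, ENNReal.ofReal (X ω ^ 2) ∂μ
      ≤ ENNReal.ofReal α * ∫⁻ ω, ENNReal.ofReal (f ω ^ 2) ∂μ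
        + ENNReal.ofReal β * ∫⁻ ω, ENNReal.ofReal (g ω ^ 2) ∂μ
        + (ENNReal.ofReal γ * ∫⁻ ω, ENNReal.ofReal (h ω ^ 2) ∂μ + ENNReal.ofReal δ) := by
  have hpt : ∀ ω, ENNReal.ofReal (X ω ^ 2)
      ≤ ENNReal.ofReal α * ENNReal.ofReal (f ω ^ 2) + ENNReal.ofReal β * ENNReal.ofReal (g ω ^ 2)
        + (ENNReal.ofReal γ * ENNReal.ofReal (h ω ^ 2) + ENNReal.ofReal δ) := fun ω => by
    simp only [← ENNReal.ofReal_mul' (sq_nonneg _)]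
    exact (ENNReal.ofReal_le_ofReal (hX ω)).trans <| ENNReal.ofReal_add_le.trans <|
      add_le_add ENNReal.ofReal_add_le ENNReal.ofReal_add_le
  have hf' := (hf.pow_const 2).ennreal_ofReal.const_mul (ENNReal.ofReal α)
  have hfg : AEMeasurable (fun ω => ENNReal.ofReal α * ENNReal.ofReal (f ω ^ 2)
      + ENNReal.ofReal β * ENNReal.ofReal (g ω ^ 2)) μ :=
    hf'.add ((hg.pow_const 2).ennreal_ofReal.const_mul _)
  refine (lintegral_mono hpt).trans_eq ?_
  rw [lintegral_add_left' hfg, lintegral_add_left' hf', lintegral_add_right _ measurable_const,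
    lintegral_const_mul' _ _ ENNReal.ofReal_ne_top, lintegral_const_mul' _ _ ENNReal.ofReal_ne_top,
    lintegral_const_mul' _ _ ENNReal.ofReal_ne_top, lintegral_const, measure_univ, mul_one]

lemma Int.induction_of_delay {N : ℕ} (hN : 1 ≤ N) {P : ℤ → Prop}
    (init : ∀ k : ℤ, -(N : ℤ) ≤ k → k ≤ 0 → P k)
    (step : ∀ n : ℕ, P n → P (n + 1 - N) → P (n + 1)) :
    ∀ k : ℤ, -(N : ℤ) ≤ k → P k := by
  have upTo : ∀ n : ℕ, ∀ k : ℤ, -(N : ℤ) ≤ k → k ≤ n → P k := by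
    intro n
    induction n with
    | zero => simpa using init
    | succ n ih =>
      intro k hk hkn
      rcases lt_or_eq_of_le hkn with hlt | rfl
      · exact ih k hk (by omega)
      · push_cast
        exact step n (ih n (by omega) le_rfl) (ih _ (by omega) (by omega))
  exact fun k hk => upTo k.toNat k hk (Int.self_le_toNat k)

lemma ENNReal.le_pow_mul_of_delay_recursion {u : ℤ → ℝ≥0∞} {N : ℕ} (hN : 1 ≤ N)
    {a b c B : ℝ≥0∞} (init : ∀ k : ℤ, -(N : ℤ) ≤ k → k ≤ 0 → u k ≤ B) (hcB : c ≤ B)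
    (step : ∀ n : ℕ, u (n + 1) ≤ a * u n + b * u (n + 1 - N) + c) (n : ℕ) :
    u n ≤ (a + b + 1) ^ n * B := by
  set G := a + b + 1
  have hG : 1 ≤ G := le_add_self
  have key : ∀ k : ℤ, -(N : ℤ) ≤ k → u k ≤ G ^ k.toNat * B := by
    refine Int.induction_of_delay hN
      (fun k hk hk0 => by simpa [Int.toNat_of_nonpos hk0] using init k hk hk0) fun n hn hdelay => ?_
    have hdelay' : u (n + 1 - N) ≤ G ^ n * B :=
      hdelay.trans (mul_le_mul_left (pow_le_pow_right₀ hG (by omega)) _)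
    have hc : c ≤ G ^ n * B := hcB.trans (le_mul_of_one_le_left' (one_le_pow₀ hG))
    rw [show ((n : ℤ) + 1).toNat = n + 1 by omega]
    calc u (n + 1) ≤ a * (G ^ n * B) + b * (G ^ n * B) + G ^ n * B := by
          grw [step n, hc, hdelay', (by simpa using hn : u n ≤ G ^ n * B)]
      _ = G ^ (n + 1) * B := by ring
  simpa using key n (by omega)

theorem implicit_euler_second_moment_bound_general
    {Ω : Type*} [MeasurableSpace Ω] (μ : Measure Ω) [IsProbabilityMeasure μ]
    (N : ℕ) (hN : 1 ≤ N) (τ t₀ : ℝ) (hτ : 0 < τ)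
    (Δ : ℝ) (hΔ : Δ = τ / N)
    (aBar bBar σBar aStar : ℝ)
    (haBar : 0 ≤ aBar) (hbBar : 0 ≤ bBar)
    (aLow : ℝ → ℝ)
    (haLow : ∀ t, 0 ≤ aLow t ∧ aLow t ≤ aStar)
    (ΔW : ℕ → Ω → ℝ)
    (hWlaw : ∀ k, μ.map (ΔW k) = gaussianReal 0 (Real.toNNReal Δ))
    (y : ℤ → Ω → ℝ)
    (hymeas : ∀ k : ℤ, -(N : ℤ) ≤ k → k ≤ 0 → Measurable (y k))
    (K₀ : ℝ)
    (hinit : ∀ k : ℤ, -(N : ℤ) ≤ k → k ≤ 0 →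
      ∫⁻ ω, ENNReal.ofReal ((y k ω) ^ 2) ∂μ ≤ ENNReal.ofReal K₀)
    (hrec : ∀ k : ℕ, y ((k : ℤ) + 1) = fun ω =>
      (y (k : ℤ) ω + σBar * ΔW k ω +
          Real.sqrt ((y (k : ℤ) ω + σBar * ΔW k ω) ^ 2
            + 4 * (1 + aBar * Δ)
              * (aLow (t₀ + ((k : ℝ) + 1) * Δ)
                  + bBar * (y ((k : ℤ) + 1 - (N : ℤ)) ω) ^ 2) * Δ))
        / (2 * (1 + aBar * Δ))) :
    ∀ T : ℝ, t₀ < T → ∃ K_T : ℝ,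
      ∀ k : ℕ, t₀ + (k : ℝ) * Δ ≤ T →
        ∫⁻ ω, ENNReal.ofReal ((y (k : ℤ) ω) ^ 2) ∂μ ≤ ENNReal.ofReal K_T := by
  intro T _
  have hΔpos : 0 < Δ := hΔ ▸ div_pos hτ (by exact_mod_cast hN)
  have hWae (k : ℕ) : AEMeasurable (ΔW k) μ :=
    .of_map_ne_zero (hWlaw k ▸ IsProbabilityMeasure.ne_zero _)
  have hWsq (k : ℕ) : ∫⁻ ω, ENNReal.ofReal (ΔW k ω ^ 2) ∂μ = ENNReal.ofReal Δ := by
    rw [← lintegral_map' (f := fun x => ENNReal.ofReal (x ^ 2)) (by fun_prop) (hWae k), hWlaw k]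
    exact lintegral_ofReal_sq_gaussianReal _
  have hyae : ∀ k : ℤ, -(N : ℤ) ≤ k → AEMeasurable (y k) μ :=
    Int.induction_of_delay hN (fun k hk hk0 => (hymeas k hk hk0).aemeasurable)
      fun n hn hdelay => by rw [hrec n]; fun_prop
  have hsq (n : ℕ) (ω : Ω) : y (n + 1) ω ^ 2 ≤ 2 * y n ω ^ 2
      + 2 * bBar * Δ * y (n + 1 - N) ω ^ 2 + (2 * σBar ^ 2 * ΔW n ω ^ 2 + 2 * aStar * Δ) := by
    rw [hrec n]
    exact sq_implicitEuler_le (le_add_of_nonneg_right (mul_nonneg haBar hΔpos.le)) hΔpos.le (haLow _).1 (haLow _).2 hbBar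
  set G := ENNReal.ofReal 2 + ENNReal.ofReal (2 * bBar * Δ) + 1
  set B := ENNReal.ofReal K₀
    + (ENNReal.ofReal (2 * σBar ^ 2) * ENNReal.ofReal Δ + ENNReal.ofReal (2 * aStar * Δ))
  have hmoment (k : ℕ) : ∫⁻ ω, ENNReal.ofReal (y k ω ^ 2) ∂μ ≤ G ^ k * B :=
    ENNReal.le_pow_mul_of_delay_recursion (u := fun k => ∫⁻ ω, ENNReal.ofReal (y k ω ^ 2) ∂μ) hN
    (fun k hk hk0 => (hinit k hk hk0).trans le_self_add) le_add_self
    (fun n => (lintegral_ofReal_sq_le_of_sq_le (hyae n (by omega)) (hyae _ (by omega))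
      (hsq n)).trans_eq (by rw [hWsq])) k
  obtain ⟨M, hM⟩ := exists_nat_ge ((T - t₀) / Δ)
  refine ⟨(G ^ M * B).toReal, fun k hk => (hmoment k).trans ?_⟩
  rw [ENNReal.ofReal_toReal (by finiteness)]
  gcongr
  · exact le_add_self
  · exact_mod_cast ((le_div_iff₀ hΔpos).2 (by linarith : (k : ℝ) * Δ ≤ T - t₀)).trans hM

/-- Lemma 3.1: uniform second-moment bounds for the drift-implicit Euler scheme
approximating the square-root of the fixed delay CIR process. -/
theorem implicit_euler_second_moment_bound
    {Ω : Type*} [MeasurableSpace Ω] (μ : Measure Ω) [IsProbabilityMeasure μ]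
    (N : ℕ) (hN : 1 ≤ N) (τ t₀ : ℝ) (hτ : 0 < τ)
    (Δ : ℝ) (hΔ : Δ = τ / N)
    (aBar bBar σBar aStar : ℝ)
    (haBar : 0 ≤ aBar) (hbBar : 0 ≤ bBar) (hσBar : 0 < σBar)
    (aLow : ℝ → ℝ) (haLowMeas : Measurable aLow)
    (haLow : ∀ t, 0 ≤ aLow t ∧ aLow t ≤ aStar)
    (ΔW : ℕ → Ω → ℝ) (hWmeas : ∀ k, Measurable (ΔW k))
    (hWindep : iIndepFun ΔW μ)
    (hWlaw : ∀ k, μ.map (ΔW k) = gaussianReal 0 (Real.toNNReal Δ))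
    (y : ℤ → Ω → ℝ)
    (hymeas : ∀ k : ℤ, -(N : ℤ) ≤ k → k ≤ 0 → Measurable (y k))
    (hynonneg : ∀ k : ℤ, -(N : ℤ) ≤ k → k ≤ 0 → ∀ ω, 0 ≤ y k ω)
    (hindep : Indep
      (⨆ k ∈ Set.Icc (-(N : ℤ)) 0, MeasurableSpace.comap (y k) inferInstance)
      (⨆ k : ℕ, MeasurableSpace.comap (ΔW k) inferInstance) μ)
    (K₀ : ℝ)
    (hinit : ∀ k : ℤ, -(N : ℤ) ≤ k → k ≤ 0 →
      ∫⁻ ω, ENNReal.ofReal ((y k ω) ^ 2) ∂μ ≤ ENNReal.ofReal K₀)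
    (hrec : ∀ k : ℕ, y ((k : ℤ) + 1) = fun ω =>
      (y (k : ℤ) ω + σBar * ΔW k ω +
          Real.sqrt ((y (k : ℤ) ω + σBar * ΔW k ω) ^ 2
            + 4 * (1 + aBar * Δ)
              * (aLow (t₀ + ((k : ℝ) + 1) * Δ)
                  + bBar * (y ((k : ℤ) + 1 - (N : ℤ)) ω) ^ 2) * Δ))
        / (2 * (1 + aBar * Δ))) :
    ∀ T : ℝ, t₀ < T → ∃ K_T : ℝ,
      ∀ k : ℕ, t₀ + (k : ℝ) * Δ ≤ T →
        ∫⁻ ω, ENNReal.ofReal ((y (k : ℤ) ω) ^ 2) ∂μ ≤ ENNReal.ofReal K_T :=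
  implicit_euler_second_moment_bound_general μ N hN τ t₀ hτ Δ hΔ aBar bBar σBar aStar haBar hbBar
    aLow haLow ΔW hWlaw y hymeas K₀ hinit hrec
end

section
/- Fix N ∈ ℕ with N ≥ 1, τ > 0, set Δ = τ/N and t_k = t₀ + k·Δ. Let ā ≥ 0, b̄ ≥ 0, σ̄ > 0 and let a̲ : ℝ → ℝ be measurable with 0 ≤ a̲(t) ≤ a* for all t. On a probability space, let (ΔW_k)_{k≥0} be independent random variables, each with the Gaussian law N(0, Δ), and let y_{−N}, …, y₀ be nonnegative random variables, independent of the family (ΔW_k)_{k≥0}, such that for every p ≥ 1 there is a constant K_{2p} with E[y_k^{2p}] ≤ K_{2p} for all −N ≤ k ≤ 0. Define recursively for k ≥ 0: y_{k+1} = (y_k + σ̄·ΔW_k + √((y_k + σ̄·ΔW_k)² + 4·(1 + ā·Δ)·(a̲(t_{k+1}) + b̄·y²_{k+1−N})·Δ)) / (2·(1 + ā·Δ)). Then for every p ≥ 1 and every T > t₀ there exists a finite constant K_{2p,T} such that E[ sup over all k ≥ 0 with t_k ≤ T of y_k^{2p} ] ≤ K_{2p,T}. -/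
/-!
The positive root of the implicit equation satisfies
`y_{k+1} ≤ |y_k + σ̄ ΔW_k| + √((a̲ + b̄ y_{k+1-N}²) Δ) ≤ |y_k| + |σ̄| |ΔW_k| + √(a* Δ) + √(b̄ Δ) |y_{k+1-N}|`.
Gaussian increments have moments of all orders, so induction along the delay puts every `y_k`
in `L^{2p}`, and the supremum over the finitely many grid points below `T` is dominated by
their sum.
-/

open MeasureTheory ProbabilityTheory

theorem Real.sqrt_mul_add_mul_sq_le {a A b Δ v : ℝ} (haA : a ≤ A) (hA : 0 ≤ A)
    (hb : 0 ≤ b) (hΔ : 0 ≤ Δ) :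
    √((a + b * v ^ 2) * Δ) ≤ √(A * Δ) + √(b * Δ) * |v| := by
  have hA' := Real.sq_sqrt (mul_nonneg hA hΔ)
  have hb' := Real.sq_sqrt (mul_nonneg hb hΔ)
  have hcross : 0 ≤ √(A * Δ) * (√(b * Δ) * |v|) := by positivity
  rw [Real.sqrt_le_left (by positivity)]
  nlinarith [sq_abs v, mul_le_mul_of_nonneg_right haA hΔ]

theorem abs_add_sqrt_sq_add_div_le {d c u : ℝ} (hd : 1 ≤ d) (hc : 0 ≤ c) :
    |(u + √(u ^ 2 + 4 * d * c)) / (2 * d)| ≤ |u| + √c := by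
  have hlow : |u| ≤ √(u ^ 2 + 4 * d * c) := by
    rw [← Real.sqrt_sq_eq_abs]
    exact Real.sqrt_le_sqrt (by nlinarith)
  have hup : √(u ^ 2 + 4 * d * c) ≤ |u| + 2 * d * √c := by
    rw [Real.sqrt_le_left (by positivity)]
    have hd₀ : 0 ≤ d := by linarith
    have hexp : (|u| + 2 * d * √c) ^ 2 = u ^ 2 + 4 * d * (|u| * √c) + 4 * d * d * c := by
      rw [add_sq, mul_pow, mul_pow, Real.sq_sqrt hc, sq_abs]; ring
    rw [hexp]
    nlinarith [mul_nonneg hd₀ (mul_nonneg (abs_nonneg u) (Real.sqrt_nonneg c)),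
      mul_nonneg (sub_nonneg.2 hd) (mul_nonneg hd₀ hc)]
  rw [abs_of_nonneg (div_nonneg (by linarith [neg_abs_le u]) (by linarith)),
    div_le_iff₀ (by linarith)]
  nlinarith [le_abs_self u, abs_nonneg u, Real.sqrt_nonneg c]

theorem ENNReal.ofReal_rpow_le_enorm_rpow (x : ℝ) {q : ℝ} (hq : 0 ≤ q) :
    ENNReal.ofReal (x ^ q) ≤ ‖x‖ₑ ^ q := by
  rw [Real.enorm_eq_ofReal_abs, ENNReal.ofReal_rpow_of_nonneg (abs_nonneg x) hq]
  exact ENNReal.ofReal_le_ofReal ((le_abs_self _).trans (Real.abs_rpow_le_abs_rpow x q))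

theorem Int.delay_induction {N : ℕ} (hN : 1 ≤ N) {P : ℤ → Prop}
    (init : ∀ k : ℤ, -(N : ℤ) ≤ k → k ≤ 0 → P k)
    (step : ∀ k : ℕ, P k → P ((k : ℤ) + 1 - (N : ℤ)) → P ((k : ℤ) + 1)) (k : ℕ) : P k := by
  suffices h : ∀ n : ℕ, ∀ j : ℤ, -(N : ℤ) ≤ j → j ≤ n → P j from h k k (by omega) le_rfl
  intro n
  induction n with
  | zero => exact fun j hj₁ hj₂ => init j hj₁ (by exact_mod_cast hj₂)
  | succ n ih =>
    intro j hj₁ hj₂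
    rcases (show j ≤ n ∨ j = n + 1 by omega) with hj | rfl
    · exact ih j hj₁ hj
    · exact step n (ih n (by omega) le_rfl) (ih _ (by omega) (by omega))

theorem Nat.finite_setOf_add_mul_le {Δ : ℝ} (hΔ : 0 < Δ) (t₀ T : ℝ) :
    {k : ℕ | t₀ + k * Δ ≤ T}.Finite :=
  (Set.finite_Iic ⌊(T - t₀) / Δ⌋₊).subset fun _ hk =>
    Nat.le_floor ((le_div_iff₀ hΔ).2 (by linarith [hk.out]))

namespace MeasureTheory

variable {Ω : Type*} [MeasurableSpace Ω] {μ : Measure Ω}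

theorem memLp_ofReal_of_lintegral_rpow_lt_top {f : Ω → ℝ} {q : ℝ} (hq : 0 < q)
    (hf : AEStronglyMeasurable f μ) (hf₀ : ∀ ω, 0 ≤ f ω)
    (hint : ∫⁻ ω, ENNReal.ofReal (f ω ^ q) ∂μ < ⊤) : MemLp f (ENNReal.ofReal q) μ := by
  refine ⟨hf, (eLpNorm_lt_top_iff_lintegral_rpow_enorm_lt_top (by simpa using hq)
    ENNReal.ofReal_ne_top).2 ?_⟩
  simpa only [ENNReal.toReal_ofReal hq.le, Real.enorm_eq_ofReal_abs, abs_of_nonneg (hf₀ _),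
    ENNReal.ofReal_rpow_of_nonneg (hf₀ _) hq.le] using hint

theorem memLp_of_map_eq_gaussianReal {X : Ω → ℝ} (hX : AEMeasurable X μ) {m : ℝ} {v : NNReal}
    (hlaw : μ.map X = gaussianReal m v) {p : ENNReal} (hp : p ≠ ⊤) : MemLp X p μ := by
  have hid : MemLp id p (μ.map X) := hlaw ▸ memLp_id_gaussianReal' p hp
  exact hid.comp_of_map hX

theorem lintegral_iSup_ofReal_rpow_lt_top {f : ℕ → Ω → ℝ} {q : ℝ} (hq : 0 < q)
    {P : ℕ → Prop} (hP : {k | P k}.Finite) (hf : ∀ k, P k → MemLp (f k) (ENNReal.ofReal q) μ) :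
    ∫⁻ ω, ⨆ (k : ℕ) (_ : P k), ENNReal.ofReal (f k ω ^ q) ∂μ < ⊤ := by
  have hsup : ∀ ω, ⨆ (k : ℕ) (_ : P k), ENNReal.ofReal (f k ω ^ q)
      ≤ ∑ k ∈ hP.toFinset, ‖f k ω‖ₑ ^ q := fun ω =>
    iSup₂_le fun k hk => (ENNReal.ofReal_rpow_le_enorm_rpow _ hq.le).trans
      (Finset.single_le_sum (f := fun k => ‖f k ω‖ₑ ^ q) (fun _ _ => zero_le)
        (hP.mem_toFinset.2 hk))
  refine (lintegral_mono hsup).trans_lt ?_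
  rw [lintegral_finsetSum' _ fun k hk => ((hf k (hP.mem_toFinset.1 hk)).1.enorm.pow_const q)]
  refine ENNReal.sum_lt_top.2 fun k hk => ?_
  simpa [ENNReal.toReal_ofReal hq.le] using
    lintegral_rpow_enorm_lt_top_of_eLpNorm_lt_top (by simpa using hq) ENNReal.ofReal_ne_top
      (hf k (hP.mem_toFinset.1 hk)).2

theorem memLp_implicit_euler_step [IsFiniteMeasure μ] {p : ENNReal} {Y W Y' : Ω → ℝ}
    (hY : MemLp Y p μ) (hW : MemLp W p μ) (hY' : MemLp Y' p μ)
    {σ d a A b Δ : ℝ} (hd : 1 ≤ d) (hΔ : 0 ≤ Δ) (ha : 0 ≤ a) (haA : a ≤ A) (hb : 0 ≤ b) :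
    MemLp (fun ω => (Y ω + σ * W ω + √((Y ω + σ * W ω) ^ 2
      + 4 * d * (a + b * Y' ω ^ 2) * Δ)) / (2 * d)) p μ := by
  have hmeas : AEStronglyMeasurable (fun ω => (Y ω + σ * W ω + √((Y ω + σ * W ω) ^ 2
      + 4 * d * (a + b * Y' ω ^ 2) * Δ)) / (2 * d)) μ := by
    have hcont : Continuous fun x : ℝ × ℝ × ℝ => (x.1 + σ * x.2.1 + √((x.1 + σ * x.2.1) ^ 2
        + 4 * d * (a + b * x.2.2 ^ 2) * Δ)) / (2 * d) := by fun_prop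
    exact hcont.comp_aestronglyMeasurable (hY.1.prodMk (hW.1.prodMk hY'.1))
  refine (((hY.norm.add (hW.norm.const_mul |σ|)).add (memLp_const √(A * Δ))).add
    (hY'.norm.const_mul √(b * Δ))).mono' hmeas (Filter.Eventually.of_forall fun ω => ?_)
  have hA : 0 ≤ A := ha.trans haA
  calc ‖(Y ω + σ * W ω + √((Y ω + σ * W ω) ^ 2 + 4 * d * (a + b * Y' ω ^ 2) * Δ)) / (2 * d)‖
      ≤ |Y ω + σ * W ω| + √((a + b * Y' ω ^ 2) * Δ) := by
        rw [Real.norm_eq_abs, mul_assoc (4 * d)]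
        exact abs_add_sqrt_sq_add_div_le hd (by positivity)
    _ ≤ (|Y ω| + |σ| * |W ω|) + (√(A * Δ) + √(b * Δ) * |Y' ω|) := by
        gcongr
        · exact (abs_add_le _ _).trans_eq (by rw [abs_mul])
        · exact Real.sqrt_mul_add_mul_sq_le haA hA hb hΔ
    _ = _ := by simp only [Pi.add_apply, Real.norm_eq_abs]; ring

end MeasureTheory

theorem implicit_euler_sup_moment_bound_general
    {Ω : Type*} [MeasurableSpace Ω] (μ : Measure Ω) [IsProbabilityMeasure μ]
    (N : ℕ) (hN : 1 ≤ N) (τ t₀ : ℝ) (hτ : 0 < τ)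
    (Δ : ℝ) (hΔ : Δ = τ / N)
    (aBar bBar σBar aStar : ℝ)
    (haBar : 0 ≤ aBar) (hbBar : 0 ≤ bBar)
    (aLow : ℝ → ℝ)
    (haLow : ∀ t, 0 ≤ aLow t ∧ aLow t ≤ aStar)
    (ΔW : ℕ → Ω → ℝ) (hWmeas : ∀ k, Measurable (ΔW k))
    (hWlaw : ∀ k, μ.map (ΔW k) = gaussianReal 0 (Real.toNNReal Δ))
    (y : ℤ → Ω → ℝ)
    (hymeas : ∀ k : ℤ, -(N : ℤ) ≤ k → k ≤ 0 → Measurable (y k))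
    (hynonneg : ∀ k : ℤ, -(N : ℤ) ≤ k → k ≤ 0 → ∀ ω, 0 ≤ y k ω)
    (hinit : ∀ p : ℝ, 1 ≤ p → ∃ K : ℝ, ∀ k : ℤ, -(N : ℤ) ≤ k → k ≤ 0 →
      ∫⁻ ω, ENNReal.ofReal ((y k ω) ^ (2 * p)) ∂μ ≤ ENNReal.ofReal K)
    (hrec : ∀ k : ℕ, y ((k : ℤ) + 1) = fun ω =>
      (y (k : ℤ) ω + σBar * ΔW k ω +
          Real.sqrt ((y (k : ℤ) ω + σBar * ΔW k ω) ^ 2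
            + 4 * (1 + aBar * Δ)
              * (aLow (t₀ + ((k : ℝ) + 1) * Δ)
                  + bBar * (y ((k : ℤ) + 1 - (N : ℤ)) ω) ^ 2) * Δ))
        / (2 * (1 + aBar * Δ))) :
    ∀ p : ℝ, 1 ≤ p → ∀ T : ℝ, t₀ < T → ∃ K : ℝ,
      ∫⁻ ω, (⨆ (k : ℕ) (_ : t₀ + (k : ℝ) * Δ ≤ T),
          ENNReal.ofReal ((y (k : ℤ) ω) ^ (2 * p))) ∂μ ≤ ENNReal.ofReal K := by
  intro p hp T _
  have hq : 0 < 2 * p := by linarith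
  have hΔpos : 0 < Δ := hΔ ▸ div_pos hτ (by exact_mod_cast hN)
  obtain ⟨K₀, hK₀⟩ := hinit p hp
  have hmoment : ∀ k : ℕ, MemLp (y k) (ENNReal.ofReal (2 * p)) μ := by
    refine Int.delay_induction (P := fun k => MemLp (y k) (ENNReal.ofReal (2 * p)) μ) hN
      (fun k hk₁ hk₂ => ?_) fun k hk hk' => ?_
    · exact memLp_ofReal_of_lintegral_rpow_lt_top hq (hymeas k hk₁ hk₂).aestronglyMeasurable
        (hynonneg k hk₁ hk₂) ((hK₀ k hk₁ hk₂).trans_lt ENNReal.ofReal_lt_top)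
    · rw [hrec k]
      exact memLp_implicit_euler_step hk
        (memLp_of_map_eq_gaussianReal (hWmeas k).aemeasurable (hWlaw k) ENNReal.ofReal_ne_top) hk'
        (le_add_of_nonneg_right (mul_nonneg haBar hΔpos.le)) hΔpos.le (haLow _).1 (haLow _).2 hbBar
  have hfin := lintegral_iSup_ofReal_rpow_lt_top hq (Nat.finite_setOf_add_mul_le hΔpos t₀ T)
    fun k _ => hmoment k
  exact ⟨_, (ENNReal.ofReal_toReal hfin.ne).ge⟩

/-- Proposition 3.2: moment bounds of all orders, uniform over the grid, for the
drift-implicit Euler scheme approximating the square-root of the fixed delay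
CIR process. -/
theorem implicit_euler_sup_moment_bound
    {Ω : Type*} [MeasurableSpace Ω] (μ : Measure Ω) [IsProbabilityMeasure μ]
    (N : ℕ) (hN : 1 ≤ N) (τ t₀ : ℝ) (hτ : 0 < τ)
    (Δ : ℝ) (hΔ : Δ = τ / N)
    (aBar bBar σBar aStar : ℝ)
    (haBar : 0 ≤ aBar) (hbBar : 0 ≤ bBar) (hσBar : 0 < σBar)
    (aLow : ℝ → ℝ) (haLowMeas : Measurable aLow)
    (haLow : ∀ t, 0 ≤ aLow t ∧ aLow t ≤ aStar)
    (ΔW : ℕ → Ω → ℝ) (hWmeas : ∀ k, Measurable (ΔW k))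
    (hWindep : iIndepFun ΔW μ)
    (hWlaw : ∀ k, μ.map (ΔW k) = gaussianReal 0 (Real.toNNReal Δ))
    (y : ℤ → Ω → ℝ)
    (hymeas : ∀ k : ℤ, -(N : ℤ) ≤ k → k ≤ 0 → Measurable (y k))
    (hynonneg : ∀ k : ℤ, -(N : ℤ) ≤ k → k ≤ 0 → ∀ ω, 0 ≤ y k ω)
    (hindep : Indep
      (⨆ k ∈ Set.Icc (-(N : ℤ)) 0, MeasurableSpace.comap (y k) inferInstance)
      (⨆ k : ℕ, MeasurableSpace.comap (ΔW k) inferInstance) μ)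
    (hinit : ∀ p : ℝ, 1 ≤ p → ∃ K : ℝ, ∀ k : ℤ, -(N : ℤ) ≤ k → k ≤ 0 →
      ∫⁻ ω, ENNReal.ofReal ((y k ω) ^ (2 * p)) ∂μ ≤ ENNReal.ofReal K)
    (hrec : ∀ k : ℕ, y ((k : ℤ) + 1) = fun ω =>
      (y (k : ℤ) ω + σBar * ΔW k ω +
          Real.sqrt ((y (k : ℤ) ω + σBar * ΔW k ω) ^ 2
            + 4 * (1 + aBar * Δ)
              * (aLow (t₀ + ((k : ℝ) + 1) * Δ)
                  + bBar * (y ((k : ℤ) + 1 - (N : ℤ)) ω) ^ 2) * Δ))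
        / (2 * (1 + aBar * Δ))) :
    ∀ p : ℝ, 1 ≤ p → ∀ T : ℝ, t₀ < T → ∃ K : ℝ,
      ∫⁻ ω, (⨆ (k : ℕ) (_ : t₀ + (k : ℝ) * Δ ≤ T),
          ENNReal.ofReal ((y (k : ℤ) ω) ^ (2 * p))) ∂μ ≤ ENNReal.ofReal K :=
  implicit_euler_sup_moment_bound_general μ N hN τ t₀ hτ Δ hΔ aBar bBar σBar aStar haBar hbBar aLow
    haLow ΔW hWmeas hWlaw y hymeas hynonneg hinit hrec
end

section
/- Let a̲ : ℝ → ℝ be a function with a̲(t) ≥ 0 for all t, let ā ≥ 0, b̄ ≥ 0, and define f(t, y, z) = a̲(t)/y − ā·y + b̄·z²/y for y > 0. Fix Δ > 0, N ≥ 1, an index m ∈ ℤ, and time points t_k. Let (Y_k)_{k ≥ m−N} and (y_k)_{k ≥ m−N} be sequences of positive reals, let (r_k) be reals, and set e_k := Y_k − y_k. Assume that for every k with m ≤ k < m+N one has e_{k+1} = e_k + [f(t_{k+1}, Y_{k+1}, Y_{k+1−N}) − f(t_{k+1}, y_{k+1}, y_{k+1−N})]·Δ + r_k. Then max_{m ≤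 k ≤ m+N} |e_k| ≤ b̄·Δ·Σ_{k=m}^{m+N−1} |Y²_{k+1−N} − y²_{k+1−N}| / Y_{k+1} + 2·Σ_{k=m}^{m+N−1} |r_k| + max_{m−N ≤ k ≤ m} |e_k|. -/
/-!
Writing `e = Y - y`, the drift `f(t, y, z) = a(t)/y - ā y + b̄ z²/y` satisfies the one-sided bound
`e · (f(t, Y, Z) - f(t, y, z)) ≤ b̄ · e · (Z² - z²) / Y`, since the remaining terms of the difference
are `-(a/(Y y) + ā + b̄ z²/(Y y)) e²`. Because the scheme is implicit, multiplying the recursion by the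
new error `e_{k+1}` (rather than by `e_k`) lets this bound absorb the drift, giving
`|e_{k+1}| ≤ |e_k| + b̄ Δ |Z² - z²| / Y + |r_k|`; summing these increments over the block proves the
estimate.
-/

open Finset

lemma sub_mul_sub_drift_le {a aBar bBar Y y Z z : ℝ} (ha : 0 ≤ a) (haBar : 0 ≤ aBar)
    (hbBar : 0 ≤ bBar) (hY : 0 < Y) (hy : 0 < y) :
    (Y - y) * ((a / Y - aBar * Y + bBar * Z ^ 2 / Y) - (a / y - aBar * y + bBar * z ^ 2 / y)) ≤
      bBar * (Y - y) * (Z ^ 2 - z ^ 2) / Y := by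
  have hsplit : (Y - y) * ((a / Y - aBar * Y + bBar * Z ^ 2 / Y) -
        (a / y - aBar * y + bBar * z ^ 2 / y)) =
      bBar * (Y - y) * (Z ^ 2 - z ^ 2) / Y - ((a + bBar * z ^ 2) / (Y * y) + aBar) * (Y - y) ^ 2 := by
    field_simp
    ring
  have hdissipative : 0 ≤ ((a + bBar * z ^ 2) / (Y * y) + aBar) * (Y - y) ^ 2 := by positivity
  linarith

lemma sub_mul_sub_drift_le_abs {a aBar bBar Y y Z z : ℝ} (ha : 0 ≤ a) (haBar : 0 ≤ aBar)
    (hbBar : 0 ≤ bBar) (hY : 0 < Y) (hy : 0 < y) :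
    (Y - y) * ((a / Y - aBar * Y + bBar * Z ^ 2 / Y) - (a / y - aBar * y + bBar * z ^ 2 / y)) ≤
      bBar * |Z ^ 2 - z ^ 2| / Y * |Y - y| := by
  calc _ ≤ bBar * (Y - y) * (Z ^ 2 - z ^ 2) / Y := sub_mul_sub_drift_le ha haBar hbBar hY hy
    _ = bBar / Y * ((Y - y) * (Z ^ 2 - z ^ 2)) := by ring
    _ ≤ bBar / Y * (|Y - y| * |Z ^ 2 - z ^ 2|) :=
      mul_le_mul_of_nonneg_left ((le_abs_self _).trans (abs_mul _ _).le) (by positivity)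
    _ = bBar * |Z ^ 2 - z ^ 2| / Y * |Y - y| := by ring

lemma abs_le_of_implicit_step {e e' D r Δ c : ℝ} (hΔ : 0 ≤ Δ) (hc : 0 ≤ c)
    (hstep : e' = e + D * Δ + r) (hD : e' * D ≤ c * |e'|) :
    |e'| ≤ |e| + c * Δ + |r| := by
  have hmul (x : ℝ) : e' * x ≤ |e'| * |x| := (le_abs_self _).trans (abs_mul _ _).le
  have hsq : |e'| * |e'| ≤ |e'| * (|e| + c * Δ + |r|) := by
    calc |e'| * |e'| = e' * e + e' * D * Δ + e' * r := by rw [abs_mul_abs_self, hstep]; ring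
      _ ≤ |e'| * |e| + c * |e'| * Δ + |e'| * |r| :=
        add_le_add (add_le_add (hmul e) (mul_le_mul_of_nonneg_right hD hΔ)) (hmul r)
      _ = |e'| * (|e| + c * Δ + |r|) := by ring
  rcases (abs_nonneg e').eq_or_lt with hzero | hpos
  · rw [← hzero]
    positivity
  · exact le_of_mul_le_mul_left hsq hpos

lemma le_add_sum_Ico_of_le_add {M : Type*} [AddCommMonoid M] [PartialOrder M]
    [IsOrderedAddMonoid M] {u g : ℤ → M} {m n : ℤ}
    (hstep : ∀ k, m ≤ k → k < n → u (k + 1) ≤ u k + g k)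
    (hg : ∀ k, m ≤ k → k < n → 0 ≤ g k) :
    ∀ k ∈ Icc m n, u k ≤ u m + ∑ j ∈ Ico m n, g j := by
  have htele : ∀ k, m ≤ k → k ≤ n → u k ≤ u m + ∑ j ∈ Ico m k, g j := by
    refine Int.leInduction (by simp) fun k hmk ih hkn => ?_
    calc u (k + 1) ≤ u k + g k := hstep k hmk (by omega)
      _ ≤ u m + ∑ j ∈ Ico m k, g j + g k := add_le_add (ih (by omega)) le_rfl
      _ = u m + ∑ j ∈ Ico m (k + 1), g j := by
        rw [← sum_Ico_add_eq_sum_Ico_add_one hmk, add_assoc]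
  intro k hk
  rw [mem_Icc] at hk
  refine (htele k hk.1 hk.2).trans (add_le_add le_rfl ?_)
  exact sum_le_sum_of_subset_of_nonneg (Ico_subset_Ico_right hk.2)
    fun j hj _ => hg j (mem_Ico.1 hj).1 (mem_Ico.1 hj).2

/-- Deterministic block error estimate (heart of Proposition 4.2): the error of the
drift-implicit Euler scheme over one delay block is controlled by the error over the
previous block, the local errors, and the errors of the delayed squared values. -/
theorem block_error_estimate
    (aLow : ℝ → ℝ) (ha : ∀ t, 0 ≤ aLow t)
    (aBar bBar : ℝ) (haBar : 0 ≤ aBar) (hbBar : 0 ≤ bBar)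
    (f : ℝ → ℝ → ℝ → ℝ)
    (hf : ∀ t y z, f t y z = aLow t / y - aBar * y + bBar * z ^ 2 / y)
    (Δ : ℝ) (hΔ : 0 < Δ) (N : ℕ) (m : ℤ) (t : ℤ → ℝ)
    (Y y : ℤ → ℝ) (r : ℤ → ℝ) (e : ℤ → ℝ)
    (hY : ∀ k : ℤ, m - N ≤ k → 0 < Y k)
    (hy : ∀ k : ℤ, m - N ≤ k → 0 < y k)
    (he : ∀ k : ℤ, e k = Y k - y k)
    (hrec : ∀ k : ℤ, m ≤ k → k < m + N →
      e (k + 1) = e k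
        + (f (t (k + 1)) (Y (k + 1)) (Y (k + 1 - N))
            - f (t (k + 1)) (y (k + 1)) (y (k + 1 - N))) * Δ
        + r k) :
    (Finset.Icc m (m + (N : ℤ))).sup'
        (Finset.nonempty_Icc.mpr (by omega)) (fun k => |e k|) ≤
      bBar * Δ * ∑ k ∈ Finset.Icc m (m + (N : ℤ) - 1),
          |(Y (k + 1 - N)) ^ 2 - (y (k + 1 - N)) ^ 2| / Y (k + 1)
        + 2 * ∑ k ∈ Finset.Icc m (m + (N : ℤ) - 1), |r k|
        + (Finset.Icc (m - (N : ℤ)) m).sup'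
            (Finset.nonempty_Icc.mpr (by omega))
            (fun k => |e k|) := by
  set c : ℤ → ℝ := fun k => bBar * |Y (k + 1 - N) ^ 2 - y (k + 1 - N) ^ 2| / Y (k + 1)
  have hc : ∀ k, m ≤ k → k < m + N → 0 ≤ c k := fun k hk _ => by
    have := hY (k + 1) (by omega)
    positivity
  have hstep : ∀ k, m ≤ k → k < m + N → |e (k + 1)| ≤ |e k| + (c k * Δ + |r k|) := by
    intro k hk hkN
    rw [← add_assoc]
    refine abs_le_of_implicit_step hΔ.le (hc k hk hkN) (hrec k hk hkN) ?_
    rw [hf, hf, he]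
    exact sub_mul_sub_drift_le_abs (ha _) haBar hbBar (hY _ (by omega)) (hy _ (by omega))
  have hpos : ∀ k, m ≤ k → k < m + N → 0 ≤ c k * Δ + |r k| := fun k hk hkN => by
    have := hc k hk hkN
    positivity
  have hsum : ∑ k ∈ Ico m (m + N), (c k * Δ + |r k|) =
      bBar * Δ * ∑ k ∈ Icc m (m + N - 1), |Y (k + 1 - N) ^ 2 - y (k + 1 - N) ^ 2| / Y (k + 1)
        + ∑ k ∈ Icc m (m + N - 1), |r k| := by
    rw [Icc_sub_one_right_eq_Ico, sum_add_distrib, mul_sum]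
    congr 1
    exact sum_congr rfl fun k _ => by ring
  have hr : 0 ≤ ∑ k ∈ Icc m (m + (N : ℤ) - 1), |r k| := sum_nonneg fun _ _ => abs_nonneg _
  have hinit : |e m| ≤ (Icc (m - (N : ℤ)) m).sup' (nonempty_Icc.mpr (by omega)) (|e ·|) :=
    le_sup' (|e ·|) (by rw [mem_Icc]; omega)
  refine sup'_le _ _ fun k hk => ?_
  have := le_add_sum_Ico_of_le_add (u := (|e ·|)) hstep hpos k hk
  linarith
end

section
/- For all reals p > 0, L > 0, ζ > 0 and any real g, the following identity of (possibly infinite) integrals of nonnegative functions holds: ∫₀^∞ u^{p−1}·(2uL + 1)^{−g}·exp(−u·L·ζ/(2uL + 1)) du = (L·ζ)^{−p} · ∫₀^{ζ/2} y^{p−1}·(1 − 2y/ζ)^{g−p−1}·e^{−y} dy. -/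
/-!
The substitution `y = a u / (b u + 1)` with `a = L ζ`, `b = 2 L` is a strictly increasing
bijection of `(0, ∞)` onto `(0, a / b) = (0, ζ / 2)` with derivative `a / (b u + 1)²`, and along
it `1 - 2 y / ζ = 1 / (2 u L + 1)`. The change of variables formula for lower Lebesgue integrals
then turns the right-hand side into the left-hand side, the powers of `L ζ` and of `2 u L + 1`
cancelling.
-/

open MeasureTheory Set

theorem hasDerivAt_mul_div_mul_add_one (a : ℝ) {b u : ℝ} (hu : b * u + 1 ≠ 0) :
    HasDerivAt (fun u => a * u / (b * u + 1)) (a / (b * u + 1) ^ 2) u := by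
  have h : HasDerivAt (fun u => a * u / (b * u + 1))
      ((a * 1 * (b * u + 1) - a * u * (b * 1)) / (b * u + 1) ^ 2) u :=
    ((hasDerivAt_id' u).const_mul a).div (((hasDerivAt_id' u).const_mul b).add_const 1) hu
  exact h.congr_deriv (by ring)

section FractionalLinear

variable {a b : ℝ}

theorem strictMonoOn_mul_div_mul_add_one (ha : 0 < a) (hb : 0 ≤ b) :
    StrictMonoOn (fun u => a * u / (b * u + 1)) (Ioi 0) := by
  intro x (hx : 0 < x) y (hy : 0 < y) hxy
  rw [div_lt_div_iff₀ (by positivity) (by positivity)]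
  nlinarith

theorem image_mul_div_mul_add_one_Ioi (ha : 0 < a) (hb : 0 < b) :
    (fun u => a * u / (b * u + 1)) '' Ioi 0 = Ioo 0 (a / b) := by
  ext y
  constructor
  · rintro ⟨u, hu : 0 < u, rfl⟩
    refine ⟨by positivity, ?_⟩
    rw [div_lt_div_iff₀ (by positivity) hb]
    nlinarith
  · rintro ⟨hy, hyab⟩
    have hay : 0 < a - b * y := by rw [lt_div_iff₀ hb] at hyab; linarith
    refine ⟨y / (a - b * y), div_pos hy hay, ?_⟩
    have hden : b * (y / (a - b * y)) + 1 = a / (a - b * y) := by field_simp; ring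
    simp only [hden]
    field_simp
    exact div_self (by linarith)

theorem lintegral_Ioo_div_eq_lintegral_Ioi_mul_div_mul_add_one (ha : 0 < a) (hb : 0 < b)
    (G : ℝ → ENNReal) :
    ∫⁻ y in Ioo 0 (a / b), G y =
      ∫⁻ u in Ioi 0, ENNReal.ofReal (a / (b * u + 1) ^ 2) * G (a * u / (b * u + 1)) := by
  rw [← image_mul_div_mul_add_one_Ioi ha hb,
    lintegral_image_eq_lintegral_deriv_mul_of_monotoneOn measurableSet_Ioi
      (fun u (hu : 0 < u) => (hasDerivAt_mul_div_mul_add_one a (by positivity)).hasDerivWithinAt)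
      (strictMonoOn_mul_div_mul_add_one ha hb.le).monotoneOn]

end FractionalLinear

open Real in
theorem rpow_neg_mul_div_sq_mul_rpow_mul_inv_rpow (p g : ℝ) {c D u : ℝ} (hc : 0 < c) (hD : 0 < D)
    (hu : 0 ≤ u) :
    c ^ (-p) * (c / D ^ 2) * (c * u / D) ^ (p - 1) * D⁻¹ ^ (g - p - 1) =
      u ^ (p - 1) * D ^ (-g) := by
  rw [div_rpow (by positivity) hD.le, mul_rpow hc.le hu, inv_rpow hD.le, rpow_neg hc.le,
    rpow_neg hD.le, rpow_sub_one hc.ne', rpow_sub_one hD.ne', rpow_sub_one hD.ne', rpow_sub hD]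
  have := rpow_pos_of_pos hc p
  have := rpow_pos_of_pos hD p
  have := rpow_pos_of_pos hD g
  field_simp

theorem cir_substituted_integrand_eq (p g : ℝ) {L ζ u : ℝ} (hL : 0 < L) (hζ : 0 < ζ)
    (hu : 0 < u) :
    (L * ζ) ^ (-p) * (L * ζ / (2 * L * u + 1) ^ 2 *
      ((L * ζ * u / (2 * L * u + 1)) ^ (p - 1)
        * (1 - 2 * (L * ζ * u / (2 * L * u + 1)) / ζ) ^ (g - p - 1)
        * Real.exp (-(L * ζ * u / (2 * L * u + 1))))) =
    u ^ (p - 1) * (2 * u * L + 1) ^ (-g) * Real.exp (-(u * L * ζ) / (2 * u * L + 1)) := by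
  set D := 2 * L * u + 1
  have hD_pos : 0 < D := by positivity
  have h_one_sub : 1 - 2 * (L * ζ * u / D) / ζ = D⁻¹ := by field_simp; ring
  have h_exp : -(u * L * ζ) / (2 * u * L + 1) = -(L * ζ * u / D) := by ring
  rw [h_one_sub, h_exp, show 2 * u * L + 1 = D by ring,
    ← rpow_neg_mul_div_sq_mul_rpow_mul_inv_rpow p g (mul_pos hL hζ) hD_pos hu.le]
  ring

theorem cir_laplace_change_of_variable_general
    (p L ζ g : ℝ) (hL : 0 < L) (hζ : 0 < ζ) :
    ∫⁻ u in Set.Ioi (0 : ℝ),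
        ENNReal.ofReal (u ^ (p - 1) * (2 * u * L + 1) ^ (-g)
          * Real.exp (-(u * L * ζ) / (2 * u * L + 1))) =
      ENNReal.ofReal ((L * ζ) ^ (-p)) *
        ∫⁻ y in Set.Ioo (0 : ℝ) (ζ / 2),
          ENNReal.ofReal (y ^ (p - 1) * (1 - 2 * y / ζ) ^ (g - p - 1)
            * Real.exp (-y)) := by
  have hLζ : 0 < L * ζ := mul_pos hL hζ
  rw [show ζ / 2 = L * ζ / (2 * L) by field_simp,
    lintegral_Ioo_div_eq_lintegral_Ioi_mul_div_mul_add_one hLζ (by positivity),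
    ← lintegral_const_mul' _ _ ENNReal.ofReal_ne_top]
  refine setLIntegral_congr_fun measurableSet_Ioi fun u (hu : 0 < u) => ?_
  rw [← ENNReal.ofReal_mul (by positivity), ← ENNReal.ofReal_mul (by positivity),
    cir_substituted_integrand_eq p g hL hζ hu]

/-- Change-of-variable identity (via `y = u·L·ζ/(2uL+1)`) from the proof of Lemma A
in the appendix, as an identity of (possibly infinite) Lebesgue integrals of
nonnegative functions. -/
theorem cir_laplace_change_of_variable
    (p L ζ g : ℝ) (hp : 0 < p) (hL : 0 < L) (hζ : 0 < ζ) :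
    ∫⁻ u in Set.Ioi (0 : ℝ),
        ENNReal.ofReal (u ^ (p - 1) * (2 * u * L + 1) ^ (-g)
          * Real.exp (-(u * L * ζ) / (2 * u * L + 1))) =
      ENNReal.ofReal ((L * ζ) ^ (-p)) *
        ∫⁻ y in Set.Ioo (0 : ℝ) (ζ / 2),
          ENNReal.ofReal (y ^ (p - 1) * (1 - 2 * y / ζ) ^ (g - p - 1)
            * Real.exp (-y)) :=
  cir_laplace_change_of_variable_general p L ζ g hL hζ
end

section
/- Let p ≥ 1, ζ > 0, and let g be a real number with p < g < p + 1. Then ∫₀^{ζ/2} y^{p−1}·(1 − 2y/ζ)^{g−p−1}·e^{−y} dy ≤ L_p·Γ(p), where L_p = 2^{p+1−g} + 2^{2p−g}·p^p·e^{−p}/(Γ(p)·(g − p)) and Γ denotes the Gamma function. -/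
/-!
Split the range at `ζ / 4`. On `(0, ζ/4]` the base `1 - 2y/ζ` is at least `1/2` and the exponent
`g - p - 1` is nonpositive, so the singular factor is at most `2^(p+1-g)` and what remains is the
Gamma integral. On `(ζ/4, ζ/2)` the maximum of `y^p e^(-y)`, attained at `y = p`, bounds
`y^(p-1) e^(-y)` by `(4/ζ) p^p e^(-p)`, and the singular factor, whose exponent exceeds `-1`, is
integrated exactly; this gives `2^(p+1-g) p^p e^(-p) / (g - p)`, and `p ≥ 1` turns `2^(p+1-g)`
into `2^(2p-g)`.
-/

open MeasureTheory Set Real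

lemma lintegral_Ioo_sub_rpow {a b r : ℝ} (hab : a ≤ b) (hr : -1 < r) :
    ∫⁻ y in Ioo a b, ENNReal.ofReal ((b - y) ^ r) =
      ENNReal.ofReal ((b - a) ^ (r + 1) / (r + 1)) := by
  have hint : IntervalIntegrable (fun y => (b - y) ^ r) volume a b := by
    simpa using
      (intervalIntegral.intervalIntegrable_rpow' hr (a := b - a) (b := 0)).comp_sub_left b
  have hval : ∫ y in a..b, (b - y) ^ r = (b - a) ^ (r + 1) / (r + 1) := by
    rw [intervalIntegral.integral_comp_sub_left (fun x => x ^ r), sub_self,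
      integral_rpow (Or.inl hr), zero_rpow (by linarith), sub_zero]
  rw [← hval, intervalIntegral.integral_of_le hab, integral_Ioc_eq_integral_Ioo,
    ofReal_integral_eq_lintegral_ofReal
      ((intervalIntegrable_iff_integrableOn_Ioo_of_le hab).1 hint)]
  filter_upwards [ae_restrict_mem measurableSet_Ioo] with y hy
  exact rpow_nonneg (by linarith [hy.2]) _

lemma lintegral_Ioi_rpow_mul_exp_neg {p : ℝ} (hp : 0 < p) :
    ∫⁻ y in Ioi 0, ENNReal.ofReal (y ^ (p - 1) * exp (-y)) = ENNReal.ofReal (Gamma p) := by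
  have hnonneg : 0 ≤ᵐ[volume.restrict (Ioi 0)] fun y : ℝ => exp (-y) * y ^ (p - 1) := by
    filter_upwards [ae_restrict_mem measurableSet_Ioi] with y (hy : 0 < y)
    positivity
  rw [Gamma_eq_integral hp,
    ofReal_integral_eq_lintegral_ofReal (GammaIntegral_convergent hp) hnonneg]
  simp_rw [mul_comm]

lemma rpow_mul_exp_neg_le {y p : ℝ} (hy : 0 ≤ y) (hp : 0 < p) :
    y ^ p * exp (-y) ≤ p ^ p * exp (-p) := by
  have h : (y / p) ^ p ≤ exp (y - p) := by
    calc (y / p) ^ p ≤ exp (y / p - 1) ^ p := by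
          gcongr
          linarith [add_one_le_exp (y / p - 1)]
      _ = exp (y - p) := by rw [← exp_mul]; congr 1; field_simp
  rw [div_rpow hy hp.le, div_le_iff₀ (by positivity), exp_sub] at h
  rw [← le_div_iff₀ (exp_pos _), exp_neg, exp_neg]
  calc y ^ p ≤ exp y / exp p * p ^ p := h
    _ = _ := by field_simp

noncomputable def cirIntegrand (p r ζ y : ℝ) : ℝ :=
  y ^ (p - 1) * (1 - 2 * y / ζ) ^ r * exp (-y)

section cirIntegrand

variable {p r ζ : ℝ}

lemma lintegral_cirIntegrand_Ioc_le (hp : 0 < p) (hζ : 0 < ζ) (hr : r ≤ 0) :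
    ∫⁻ y in Ioc 0 (ζ / 4), ENNReal.ofReal (cirIntegrand p r ζ y) ≤
      ENNReal.ofReal (2 ^ (-r) * Gamma p) := by
  have hbound : ∀ y ∈ Ioc 0 (ζ / 4), ENNReal.ofReal (cirIntegrand p r ζ y) ≤
      ENNReal.ofReal (2 ^ (-r)) * ENNReal.ofReal (y ^ (p - 1) * exp (-y)) := by
    rintro y ⟨hy₀, hy⟩
    rw [← ENNReal.ofReal_mul (by positivity)]
    refine ENNReal.ofReal_le_ofReal ?_
    have hhalf : 1 / 2 ≤ 1 - 2 * y / ζ := by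
      rw [le_sub_comm, div_le_iff₀ hζ]; linarith
    have hfactor : (1 - 2 * y / ζ) ^ r ≤ 2 ^ (-r) :=
      calc (1 - 2 * y / ζ) ^ r ≤ (1 / 2) ^ r := rpow_le_rpow_of_nonpos (by norm_num) hhalf hr
        _ = 2 ^ (-r) := by rw [one_div, inv_rpow zero_le_two, rpow_neg zero_le_two]
    calc cirIntegrand p r ζ y = (1 - 2 * y / ζ) ^ r * (y ^ (p - 1) * exp (-y)) := by
          rw [cirIntegrand]; ring
      _ ≤ 2 ^ (-r) * (y ^ (p - 1) * exp (-y)) := by gcongr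
  calc _ ≤ ∫⁻ y in Ioc 0 (ζ / 4),
          ENNReal.ofReal (2 ^ (-r)) * ENNReal.ofReal (y ^ (p - 1) * exp (-y)) :=
        setLIntegral_mono' measurableSet_Ioc hbound
    _ ≤ ∫⁻ y in Ioi 0, ENNReal.ofReal (2 ^ (-r)) * ENNReal.ofReal (y ^ (p - 1) * exp (-y)) :=
        lintegral_mono_set Ioc_subset_Ioi_self
    _ = ENNReal.ofReal (2 ^ (-r)) * ENNReal.ofReal (Gamma p) := by
        rw [lintegral_const_mul' _ _ ENNReal.ofReal_ne_top, lintegral_Ioi_rpow_mul_exp_neg hp]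
    _ = _ := (ENNReal.ofReal_mul (by positivity)).symm

lemma lintegral_cirIntegrand_Ioo_le (hp : 0 < p) (hζ : 0 < ζ) (hr : -1 < r) :
    ∫⁻ y in Ioo (ζ / 4) (ζ / 2), ENNReal.ofReal (cirIntegrand p r ζ y) ≤
      ENNReal.ofReal (2 ^ (-r) * (p ^ p * exp (-p)) / (r + 1)) := by
  set M := p ^ p * exp (-p)
  set K := 4 / ζ * M * (2 / ζ) ^ r with hK_def
  have hK : 0 ≤ K := by positivity
  have hbound : ∀ y ∈ Ioo (ζ / 4) (ζ / 2), ENNReal.ofReal (cirIntegrand p r ζ y) ≤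
      ENNReal.ofReal K * ENNReal.ofReal ((ζ / 2 - y) ^ r) := by
    rintro y ⟨hy, hy'⟩
    have hy₀ : 0 < y := by linarith
    rw [← ENNReal.ofReal_mul hK]
    refine ENNReal.ofReal_le_ofReal ?_
    have hpeak : y ^ (p - 1) * exp (-y) ≤ 4 / ζ * M :=
      calc y ^ (p - 1) * exp (-y) = y ^ p * exp (-y) / y := by
            rw [rpow_sub_one hy₀.ne']; ring
        _ ≤ M / (ζ / 4) := by
            gcongr
            exact rpow_mul_exp_neg_le hy₀.le hp
        _ = 4 / ζ * M := by field_simp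
    have hsing : (1 - 2 * y / ζ) ^ r = (2 / ζ) ^ r * (ζ / 2 - y) ^ r := by
      rw [← mul_rpow (by positivity) (by linarith)]
      congr 1; field_simp
    have hpow : 0 ≤ (ζ / 2 - y) ^ r := rpow_nonneg (by linarith) r
    calc cirIntegrand p r ζ y = y ^ (p - 1) * exp (-y) * (2 / ζ) ^ r * (ζ / 2 - y) ^ r := by
          rw [cirIntegrand, hsing]; ring
      _ ≤ 4 / ζ * M * (2 / ζ) ^ r * (ζ / 2 - y) ^ r := by gcongr
  have hconst : K * ((ζ / 4) ^ (r + 1) / (r + 1)) = 2 ^ (-r) * M / (r + 1) := by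
    have hhalf : (2 / ζ) ^ r * (ζ / 4) ^ r = 2 ^ (-r) := by
      rw [← mul_rpow (by positivity) (by positivity), rpow_neg zero_le_two,
        ← inv_rpow zero_le_two]
      congr 1; field_simp; norm_num
    rw [hK_def, rpow_add_one (by positivity), ← hhalf]
    field_simp
  calc _ ≤ ∫⁻ y in Ioo (ζ / 4) (ζ / 2), ENNReal.ofReal K * ENNReal.ofReal ((ζ / 2 - y) ^ r) :=
        setLIntegral_mono' measurableSet_Ioo hbound
    _ = ENNReal.ofReal K * ENNReal.ofReal ((ζ / 4) ^ (r + 1) / (r + 1)) := by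
        rw [lintegral_const_mul' _ _ ENNReal.ofReal_ne_top,
          lintegral_Ioo_sub_rpow (by linarith) hr, show ζ / 2 - ζ / 4 = ζ / 4 by ring]
    _ = _ := by rw [← ENNReal.ofReal_mul hK, hconst]

end cirIntegrand

/-- Combined integral estimate of Lemma A, cases 2 and 3: when `p ≥ 1` and
`p < g < p + 1`, the integral `∫₀^{ζ/2} y^{p−1}(1 − 2y/ζ)^{g−p−1}e^{−y} dy`
is at most `L_p·Γ(p)` with
`L_p = 2^{p+1−g} + 2^{2p−g}·p^p·e^{−p}/(Γ(p)·(g − p))`. -/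
theorem cir_integral_estimate_combined
    (p ζ g : ℝ) (hp : 1 ≤ p) (hζ : 0 < ζ) (hg₁ : p < g) (hg₂ : g < p + 1) :
    ∫⁻ y in Set.Ioo (0 : ℝ) (ζ / 2),
        ENNReal.ofReal (y ^ (p - 1) * (1 - 2 * y / ζ) ^ (g - p - 1) * Real.exp (-y)) ≤
      ENNReal.ofReal
        ((2 ^ (p + 1 - g)
            + 2 ^ (2 * p - g) * p ^ p * Real.exp (-p) / (Real.Gamma p * (g - p)))
          * Real.Gamma p) := by
  have hp₀ : 0 < p := by linarith
  have hgp : 0 < g - p := by linarith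
  have hA := lintegral_cirIntegrand_Ioc_le (r := g - p - 1) hp₀ hζ (by linarith)
  have hB := lintegral_cirIntegrand_Ioo_le (r := g - p - 1) hp₀ hζ (by linarith)
  rw [show -(g - p - 1) = p + 1 - g by ring] at hA hB
  rw [show g - p - 1 + 1 = g - p by ring] at hB
  rw [← Ioc_union_Ioo_eq_Ioo (by linarith : 0 ≤ ζ / 4) (by linarith : ζ / 4 < ζ / 2),
    lintegral_union measurableSet_Ioo (Ioc_disjoint_Ioi_same.mono_right Ioo_subset_Ioi_self)]
  refine (add_le_add hA hB).trans ?_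
  rw [← ENNReal.ofReal_add (by positivity) (by positivity)]
  refine ENNReal.ofReal_le_ofReal ?_
  have hGamma := Gamma_pos_of_pos hp₀
  have hexp : (2 : ℝ) ^ (p + 1 - g) ≤ 2 ^ (2 * p - g) :=
    rpow_le_rpow_of_exponent_le one_le_two (by linarith)
  calc 2 ^ (p + 1 - g) * Gamma p + 2 ^ (p + 1 - g) * (p ^ p * exp (-p)) / (g - p)
      ≤ 2 ^ (p + 1 - g) * Gamma p + 2 ^ (2 * p - g) * (p ^ p * exp (-p)) / (g - p) := by
        gcongr
    _ = _ := by field_simp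
end
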